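/- (Theorem 1, narrowband near-field FIM.) Consider the narrowband near-field model with phase ξ_n[k] = d_n + (k·r_f − 1)·d − k·r_f·B, where d_n = √(d² − 2·d·n·Δ·cos θ + n²Δ²) > 0, per-antenna amplitude weight w_n = d/d_n, and phase gradient u(n,k) = (−λ/(2π), ∂ξ_n[k]/∂d, ∂ξ_n[k]/∂θ, ∂ξ_n[k]/∂B) = (−λ/(2π), (d − nΔcos θ)/d_n − 1 + k·r_f, d·nΔ·sin θ/d_n, −k·r_f). Define the Fisher information matrix entrywise by J_{pq} = γ·Σ_{n=−N/2}^{N/2} Σ_{k=−K/2}^{K/2} |s(k)|²·w_n²·u_p(n,k)·u_q(n,k). Then, assuming |s(−k)| = |s(k)| for all k, the entries of J over η = (ψ, d, θ, B) are: J_{ψψ} = γ(λ/(2π))²·E_{K,0}·A₀⁽⁰⁾; J_{ψd} = −γ(λ/(2π))·E_{K,0}·(A₀⁽¹⁾ − (Δ/d)cos θ·A₁⁽¹⁾ − A₀⁽⁰⁾); J_{ψθ} = −γ(λ/(2π))·E_{K,0}·Δ sin θ·A₁⁽¹⁾; J_{ψB} = 0; J_{dd} = γ·(E_{K,0}·C₁₁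 + E_{K,2}·r_f²·A₀⁽⁰⁾) with C₁₁ = A₀⁽⁰⁾ + A₀⁽²⁾ − 2((Δ/d)cos θ·A₁⁽²⁾ + A₀⁽¹⁾ − (Δ/d)cos θ·A₁⁽¹⁾) + (Δ²/d²)·A₂⁽²⁾·cos²θ; J_{dθ} = γ·E_{K,0}·Δ sin θ·(A₁⁽²⁾ − (Δ/d)cos θ·A₂⁽²⁾ − A₁⁽¹⁾); J_{dB} = −γ·E_{K,2}·r_f²·A₀⁽⁰⁾; J_{θθ} = γ·E_{K,0}·Δ²·sin²θ·A₂⁽²⁾; J_{θB} = 0; J_{BB} = γ·E_{K,2}·r_f²·A₀⁽⁰⁾. In particular, the distance d receives extra information C₁₁ from wavefront curvature that does not involve the bias B. -/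

import Mathlib

open Finset Matrix

/-! Each component of the phase gradient is affine in the subcarrier index,
`u(n,k) = α(n) + k β`, where `β` does not depend on `n` and `α(n)` is a polynomial in `n`
and `w_n = d/d_n`. Since `|s|²` is even, the first moment `∑ k |s(k)|²` vanishes, so the
`k`-sum of `|s(k)|² u_p u_q` collapses to `E_{K,0} α_p α_q + E_{K,2} β_p β_q`. Every entry of `J`
is then a sum over `n` of a polynomial in `n` and `w_n`, i.e. a combination of the `A_i⁽ʲ⁾`. -/

theorem map_neg_Icc_neg_self (m : ℤ) :
    (Icc (-m) m).map (Equiv.neg ℤ).toEmbedding = Icc (-m) m := by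
  ext k
  simp only [mem_map_equiv, mem_Icc, Equiv.neg_symm, Equiv.neg_apply]
  omega

theorem sum_Icc_mul_eq_zero_of_even {R : Type*} [Ring R] [IsAddTorsionFree R] {f : ℤ → R}
    (hf : Function.Even f) (m : ℤ) : ∑ k ∈ Icc (-m) m, (k : R) * f k = 0 := by
  have hodd : Function.Odd fun k : ℤ ↦ (k : R) := fun k ↦ Int.cast_neg k
  exact (hodd.mul_even hf).finsetSum_eq_zero (map_neg_Icc_neg_self m)

theorem sum_mul_affine_mul_affine {ι R : Type*} [CommRing R] (S : Finset ι) (ω x : ι → R)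
    (hx : ∑ i ∈ S, x i * ω i = 0) (a b a' b' : R) :
    ∑ i ∈ S, ω i * (a + x i * b) * (a' + x i * b')
      = (∑ i ∈ S, ω i) * a * a' + (∑ i ∈ S, x i ^ 2 * ω i) * b * b' := by
  have hsplit : ∀ i, ω i * (a + x i * b) * (a' + x i * b')
      = ω i * (a * a') + x i * ω i * (a * b' + a' * b) + x i ^ 2 * ω i * (b * b') :=
    fun i ↦ by ring
  simp only [hsplit, sum_add_distrib, ← sum_mul, hx]
  ring

theorem narrowband_nearfield_FIM_general
    (K N : ℕ) (hK : Even K)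
    (s : ℤ → ℂ) (hs : ∀ k : ℤ, ‖s (-k)‖ = ‖s k‖)
    (d θ Δ lam rf γ : ℝ) (hd : 0 < d)
    (EK0 EK2 : ℝ)
    (hEK0 : EK0 = ∑ k ∈ Finset.Icc (-(K : ℤ) / 2) ((K : ℤ) / 2),
      (‖s k‖) ^ 2)
    (hEK2 : EK2 = ∑ k ∈ Finset.Icc (-(K : ℤ) / 2) ((K : ℤ) / 2),
      (k : ℝ) ^ 2 * (‖s k‖) ^ 2)
    -- per-antenna distances d_n > 0
    (dn : ℤ → ℝ)
    -- weighted array sums A_i⁽ʲ⁾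
    (A : ℕ → ℕ → ℝ)
    (hA : ∀ i j : ℕ, A i j = ∑ n ∈ Finset.Icc (-(N : ℤ) / 2) ((N : ℤ) / 2),
      (n : ℝ) ^ i * (d / dn n) ^ (j + 2))
    -- phase gradient u(n,k) over η = (ψ, d, θ, B)
    (u : ℤ → ℤ → Fin 4 → ℝ)
    (hu : ∀ n k : ℤ, u n k =
      ![-(lam / (2 * Real.pi)),
        (d - (n : ℝ) * Δ * Real.cos θ) / dn n - 1 + (k : ℝ) * rf,
        d * (n : ℝ) * Δ * Real.sin θ / dn n,
        -((k : ℝ) * rf)])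
    -- Fisher information matrix with amplitude weights w_n = d/d_n
    (J : Matrix (Fin 4) (Fin 4) ℝ)
    (hJ : ∀ p q : Fin 4, J p q = γ *
      ∑ n ∈ Finset.Icc (-(N : ℤ) / 2) ((N : ℤ) / 2),
        ∑ k ∈ Finset.Icc (-(K : ℤ) / 2) ((K : ℤ) / 2),
          (‖s k‖) ^ 2 * (d / dn n) ^ 2 * u n k p * u n k q)
    -- the curvature-induced distance information
    (C11 : ℝ)
    (hC11 : C11 = A 0 0 + A 0 2
      - 2 * ((Δ / d) * Real.cos θ * A 1 2 + A 0 1 - (Δ / d) * Real.cos θ * A 1 1)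
      + (Δ ^ 2 / d ^ 2) * A 2 2 * (Real.cos θ) ^ 2) :
    J 0 0 = γ * (lam / (2 * Real.pi)) ^ 2 * EK0 * A 0 0 ∧
    J 0 1 = -(γ * (lam / (2 * Real.pi)) * EK0 *
      (A 0 1 - (Δ / d) * Real.cos θ * A 1 1 - A 0 0)) ∧
    J 0 2 = -(γ * (lam / (2 * Real.pi)) * EK0 * Δ * Real.sin θ * A 1 1) ∧
    J 0 3 = 0 ∧
    J 1 1 = γ * (EK0 * C11 + EK2 * rf ^ 2 * A 0 0) ∧
    J 1 2 = γ * EK0 * Δ * Real.sin θ *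
      (A 1 2 - (Δ / d) * Real.cos θ * A 2 2 - A 1 1) ∧
    J 1 3 = -(γ * EK2 * rf ^ 2 * A 0 0) ∧
    J 2 2 = γ * EK0 * Δ ^ 2 * (Real.sin θ) ^ 2 * A 2 2 ∧
    J 2 3 = 0 ∧
    J 3 3 = γ * EK2 * rf ^ 2 * A 0 0 := by
  have hsymm : -(K : ℤ) / 2 = -((K : ℤ) / 2) :=
    Int.neg_ediv_of_dvd (by exact_mod_cast hK.two_dvd)
  have hfirst : ∑ k ∈ Icc (-(K : ℤ) / 2) ((K : ℤ) / 2), (k : ℝ) * ‖s k‖ ^ 2 = 0 := by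
    rw [hsymm]
    exact sum_Icc_mul_eq_zero_of_even (fun k ↦ by simp only [hs]) _
  let α : ℤ → Fin 4 → ℝ := fun n ↦ ![-(lam / (2 * Real.pi)),
    d / dn n * (1 - Δ / d * Real.cos θ * n) - 1, Δ * Real.sin θ * n * (d / dn n), 0]
  let β : Fin 4 → ℝ := ![0, rf, 0, -rf]
  have hu_affine : ∀ n k p, u n k p = α n p + k * β p := by
    intro n k p
    fin_cases p <;> simp [hu, α, β] <;> field_simp
  have hJ_sum : ∀ p q, J p q = γ * ∑ n ∈ Icc (-(N : ℤ) / 2) ((N : ℤ) / 2),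
      (d / dn n) ^ 2 * (EK0 * α n p * α n q + EK2 * β p * β q) := by
    intro p q
    rw [hJ, hEK0, hEK2]
    congr 1
    refine sum_congr rfl fun n _ ↦ ?_
    rw [← sum_mul_affine_mul_affine _ _ _ hfirst, mul_sum]
    refine sum_congr rfl fun k _ ↦ ?_
    rw [hu_affine, hu_affine]
    ring
  subst hC11
  refine ⟨?_, ?_, ?_, by simp [hJ_sum, α, β], ?_, ?_, ?_, ?_, by simp [hJ_sum, α, β], ?_⟩
  all_goals
    simp only [hJ_sum, hA, mul_sum, sum_mul, ← sum_add_distrib, ← sum_sub_distrib, ← sum_neg_distrib]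
    refine sum_congr rfl fun n _ ↦ ?_
    simp only [α, β, Matrix.cons_val]
    ring

/-- Theorem 1: Fisher information matrix of the narrowband
near-field model over the parameters η = (ψ, d, θ, B), entrywise. -/
theorem narrowband_nearfield_FIM
    (K N : ℕ) (hK : Even K) (hN : Even N)
    (s : ℤ → ℂ) (hs : ∀ k : ℤ, ‖s (-k)‖ = ‖s k‖)
    (d θ B Δ lam rf γ : ℝ) (hd : 0 < d) (hΔ : 0 < Δ) (hlam : 0 < lam) (hγ : 0 < γ)
    (EK0 EK2 : ℝ)
    (hEK0 : EK0 = ∑ k ∈ Finset.Icc (-(K : ℤ) / 2) ((K : ℤ) / 2),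
      (‖s k‖) ^ 2)
    (hEK2 : EK2 = ∑ k ∈ Finset.Icc (-(K : ℤ) / 2) ((K : ℤ) / 2),
      (k : ℝ) ^ 2 * (‖s k‖) ^ 2)
    -- per-antenna distances d_n > 0
    (dn : ℤ → ℝ)
    (hdn : ∀ n : ℤ, dn n =
      Real.sqrt (d ^ 2 - 2 * d * (n : ℝ) * Δ * Real.cos θ + (n : ℝ) ^ 2 * Δ ^ 2))
    (hdnpos : ∀ n ∈ Finset.Icc (-(N : ℤ) / 2) ((N : ℤ) / 2), 0 < dn n)
    -- weighted array sums A_i⁽ʲ⁾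
    (A : ℕ → ℕ → ℝ)
    (hA : ∀ i j : ℕ, A i j = ∑ n ∈ Finset.Icc (-(N : ℤ) / 2) ((N : ℤ) / 2),
      (n : ℝ) ^ i * (d / dn n) ^ (j + 2))
    -- phase gradient u(n,k) over η = (ψ, d, θ, B)
    (u : ℤ → ℤ → Fin 4 → ℝ)
    (hu : ∀ n k : ℤ, u n k =
      ![-(lam / (2 * Real.pi)),
        (d - (n : ℝ) * Δ * Real.cos θ) / dn n - 1 + (k : ℝ) * rf,
        d * (n : ℝ) * Δ * Real.sin θ / dn n,
        -((k : ℝ) * rf)])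
    -- Fisher information matrix with amplitude weights w_n = d/d_n
    (J : Matrix (Fin 4) (Fin 4) ℝ)
    (hJ : ∀ p q : Fin 4, J p q = γ *
      ∑ n ∈ Finset.Icc (-(N : ℤ) / 2) ((N : ℤ) / 2),
        ∑ k ∈ Finset.Icc (-(K : ℤ) / 2) ((K : ℤ) / 2),
          (‖s k‖) ^ 2 * (d / dn n) ^ 2 * u n k p * u n k q)
    -- the curvature-induced distance information
    (C11 : ℝ)
    (hC11 : C11 = A 0 0 + A 0 2
      - 2 * ((Δ / d) * Real.cos θ * A 1 2 + A 0 1 - (Δ / d) * Real.cos θ * A 1 1)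
      + (Δ ^ 2 / d ^ 2) * A 2 2 * (Real.cos θ) ^ 2) :
    J 0 0 = γ * (lam / (2 * Real.pi)) ^ 2 * EK0 * A 0 0 ∧
    J 0 1 = -(γ * (lam / (2 * Real.pi)) * EK0 *
      (A 0 1 - (Δ / d) * Real.cos θ * A 1 1 - A 0 0)) ∧
    J 0 2 = -(γ * (lam / (2 * Real.pi)) * EK0 * Δ * Real.sin θ * A 1 1) ∧
    J 0 3 = 0 ∧
    J 1 1 = γ * (EK0 * C11 + EK2 * rf ^ 2 * A 0 0) ∧
    J 1 2 = γ * EK0 * Δ * Real.sin θ *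
      (A 1 2 - (Δ / d) * Real.cos θ * A 2 2 - A 1 1) ∧
    J 1 3 = -(γ * EK2 * rf ^ 2 * A 0 0) ∧
    J 2 2 = γ * EK0 * Δ ^ 2 * (Real.sin θ) ^ 2 * A 2 2 ∧
    J 2 3 = 0 ∧
    J 3 3 = γ * EK2 * rf ^ 2 * A 0 0 :=
  narrowband_nearfield_FIM_general K N hK s hs d θ Δ lam rf γ hd EK0 EK2 hEK0 hEK2 dn A hA u hu J hJ
    C11 hC11
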